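/- arXiv:2603.30027 — 3 statements merged into one kernel-verified Lean document; each statement's English description precedes it below -/
import Mathlib

section
/- Let Y be a 3-manifold with a contact form λ whose Reeb vector field is R, and let {R, X₁, X₂} be a contact canonical frame, i.e. X₁, X₂ are sections of ker λ satisfying [X₂,R] = X₁, [X₁,X₂] = R + I·X₁ + J·X₂, [R,X₁] = K·X₂ for smooth functions I, J, K. Then the Jacobi identity forces R(I) = J and I·K + R(J) + X₂(K) = 0. -/
/-- Lie bracket of vector fields on a normed space. -/
noncomputable def vbracket {E : Type*} [NormedAddCommGroup E] [NormedSpace ℝ E]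
    (V W : E → E) : E → E :=
  fun p => fderiv ℝ W p (V p) - fderiv ℝ V p (W p)

section helpers
variable {E : Type*} [NormedAddCommGroup E] [NormedSpace ℝ E]

private lemma sym2 {V : E → E} (hV : ContDiff ℝ (⊤ : ℕ∞) V) (p v w : E) :
    fderiv ℝ (fderiv ℝ V) p v w = fderiv ℝ (fderiv ℝ V) p w v :=
  second_derivative_symmetric (fun y => (hV.differentiable (by simp) y).hasFDerivAt)
    (((hV.fderiv_right (m := (⊤ : ℕ∞)) (by simp)).differentiable (by simp) p).hasFDerivAt) v w

private lemma fderiv_vb {V W : E → E} (hV : ContDiff ℝ (⊤ : ℕ∞) V) (hW : ContDiff ℝ (⊤ : ℕ∞) W) (p u : E) :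
    fderiv ℝ (vbracket V W) p u =
      fderiv ℝ W p (fderiv ℝ V p u) + fderiv ℝ (fderiv ℝ W) p u (V p)
      - (fderiv ℝ V p (fderiv ℝ W p u) + fderiv ℝ (fderiv ℝ V) p u (W p)) := by
  have hV' := hV.differentiable (by simp)
  have hW' := hW.differentiable (by simp)
  have hfV := (hV.fderiv_right (m := (⊤ : ℕ∞)) (by simp)).differentiable (by simp)
  have hfW := (hW.fderiv_right (m := (⊤ : ℕ∞)) (by simp)).differentiable (by simp)
  have d1 : DifferentiableAt ℝ (fun x => fderiv ℝ W x (V x)) p := (hfW p).clm_apply (hV' p)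
  have d2 : DifferentiableAt ℝ (fun x => fderiv ℝ V x (W x)) p := (hfV p).clm_apply (hW' p)
  have e : vbracket V W = fun x => (fun x => fderiv ℝ W x (V x)) x - (fun x => fderiv ℝ V x (W x)) x := rfl
  rw [e, fderiv_fun_sub d1 d2, fderiv_clm_apply (hfW p) (hV' p), fderiv_clm_apply (hfV p) (hW' p)]
  simp only [ContinuousLinearMap.sub_apply, ContinuousLinearMap.add_apply,
    ContinuousLinearMap.comp_apply, ContinuousLinearMap.flip_apply]

private lemma vb_jacobi {U V W : E → E} (hU : ContDiff ℝ (⊤ : ℕ∞) U) (hV : ContDiff ℝ (⊤ : ℕ∞) V)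
    (hW : ContDiff ℝ (⊤ : ℕ∞) W) (p : E) :
    vbracket U (vbracket V W) p + vbracket V (vbracket W U) p + vbracket W (vbracket U V) p = 0 := by
  have e1 : vbracket U (vbracket V W) p = fderiv ℝ (vbracket V W) p (U p)
      - fderiv ℝ U p (fderiv ℝ W p (V p) - fderiv ℝ V p (W p)) := rfl
  have e2 : vbracket V (vbracket W U) p = fderiv ℝ (vbracket W U) p (V p)
      - fderiv ℝ V p (fderiv ℝ U p (W p) - fderiv ℝ W p (U p)) := rfl
  have e3 : vbracket W (vbracket U V) p = fderiv ℝ (vbracket U V) p (W p)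
      - fderiv ℝ W p (fderiv ℝ V p (U p) - fderiv ℝ U p (V p)) := rfl
  rw [e1, e2, e3, fderiv_vb hV hW, fderiv_vb hW hU, fderiv_vb hU hV,
    map_sub (fderiv ℝ U p), map_sub (fderiv ℝ V p), map_sub (fderiv ℝ W p),
    sym2 hU p (V p) (W p), sym2 hV p (W p) (U p), sym2 hW p (U p) (V p)]
  abel

private lemma vb_smul {V W : E → E} {f : E → ℝ} {p : E} (hV : DifferentiableAt ℝ V p)
    (hW : DifferentiableAt ℝ W p) (hf : DifferentiableAt ℝ f p) :
    vbracket V (fun x => f x • W x) p = f p • vbracket V W p + fderiv ℝ f p (V p) • W p := by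
  show fderiv ℝ (fun x => f x • W x) p (V p) - fderiv ℝ V p (f p • W p) = _
  rw [fderiv_fun_smul hf hW, map_smul]
  simp only [ContinuousLinearMap.add_apply, ContinuousLinearMap.smul_apply,
    ContinuousLinearMap.smulRight_apply, vbracket, smul_sub]
  abel

private lemma vb_add {V W₁ W₂ : E → E} {p : E} (h1 : DifferentiableAt ℝ W₁ p)
    (h2 : DifferentiableAt ℝ W₂ p) :
    vbracket V (fun x => W₁ x + W₂ x) p = vbracket V W₁ p + vbracket V W₂ p := by
  show fderiv ℝ (fun x => W₁ x + W₂ x) p (V p) - fderiv ℝ V p (W₁ p + W₂ p) = _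
  rw [fderiv_fun_add h1 h2, map_add]
  simp only [ContinuousLinearMap.add_apply, vbracket]
  abel

private lemma vb_self (V : E → E) (p : E) : vbracket V V p = 0 := sub_self _

private lemma vb_anti (V W : E → E) (p : E) : vbracket V W p = -vbracket W V p := by
  simp only [vbracket, neg_sub]

end helpers

/-- For a contact canonical frame {R, X₁, X₂} with structure functions I, J, K,
the Jacobi identity forces R(I) = J and I·K + R(J) + X₂(K) = 0. -/
theorem stmt_1 {E : Type*} [NormedAddCommGroup E] [NormedSpace ℝ E]
    (R X₁ X₂ : E → E) (lam : E → (E →L[ℝ] ℝ)) (I J K : E → ℝ)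
    (hRs : ContDiff ℝ (⊤ : ℕ∞) R) (hX₁s : ContDiff ℝ (⊤ : ℕ∞) X₁) (hX₂s : ContDiff ℝ (⊤ : ℕ∞) X₂)
    (hIs : ContDiff ℝ (⊤ : ℕ∞) I) (hJs : ContDiff ℝ (⊤ : ℕ∞) J) (hKs : ContDiff ℝ (⊤ : ℕ∞) K)
    -- R is the Reeb field and X₁, X₂ are sections of ker λ
    (hlamR : ∀ p, lam p (R p) = 1)
    (hlamX₁ : ∀ p, lam p (X₁ p) = 0)
    (hlamX₂ : ∀ p, lam p (X₂ p) = 0)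
    -- the frame relations
    (hbr1 : ∀ p, vbracket X₂ R p = X₁ p)
    (hbr2 : ∀ p, vbracket X₁ X₂ p = R p + I p • X₁ p + J p • X₂ p)
    (hbr3 : ∀ p, vbracket R X₁ p = K p • X₂ p)
    -- X₁ and X₂ are pointwise linearly independent
    (hindep : ∀ p, LinearIndependent ℝ ![X₁ p, X₂ p]) :
    ∀ p, fderiv ℝ I p (R p) = J p ∧
      I p * K p + fderiv ℝ J p (R p) + fderiv ℝ K p (X₂ p) = 0 := by
  intro p
  have hR' := hRs.differentiable (by simp)
  have hX₁' := hX₁s.differentiable (by simp)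
  have hX₂' := hX₂s.differentiable (by simp)
  have hI' := hIs.differentiable (by simp)
  have hJ' := hJs.differentiable (by simp)
  have hK' := hKs.differentiable (by simp)
  have hjac := vb_jacobi hRs hX₁s hX₂s p
  -- term B : [X₁,[X₂,R]] = [X₁,X₁] = 0
  have hB : vbracket X₁ (vbracket X₂ R) p = 0 := by
    rw [show vbracket X₂ R = X₁ from funext hbr1, vb_self]
  -- term C : [X₂,[R,X₁]] = [X₂, K•X₂]
  have hC : vbracket X₂ (vbracket R X₁) p = fderiv ℝ K p (X₂ p) • X₂ p := by
    rw [show vbracket R X₁ = fun x => K x • X₂ x from funext hbr3,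
      vb_smul (hX₂' p) (hX₂' p) (hK' p), vb_self]
    simp
  -- term A : [R,[X₁,X₂]]
  have hA : vbracket R (vbracket X₁ X₂) p =
      (I p * K p) • X₂ p + fderiv ℝ I p (R p) • X₁ p
      + (J p • (-X₁ p) + fderiv ℝ J p (R p) • X₂ p) := by
    rw [show vbracket X₁ X₂ = fun x => (R x + I x • X₁ x) + J x • X₂ x from funext hbr2]
    rw [vb_add ((hR' p).fun_add ((hI' p).fun_smul (hX₁' p))) ((hJ' p).fun_smul (hX₂' p)),
      vb_add (hR' p) ((hI' p).fun_smul (hX₁' p)),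
      vb_smul (hR' p) (hX₁' p) (hI' p), vb_smul (hR' p) (hX₂' p) (hJ' p),
      vb_self, hbr3, vb_anti R X₂ p, hbr1, smul_smul]
    abel
  rw [hA, hB, hC] at hjac
  have key : (fderiv ℝ I p (R p) - J p) • X₁ p
      + (I p * K p + fderiv ℝ J p (R p) + fderiv ℝ K p (X₂ p)) • X₂ p = 0 := by
    rw [← hjac]; module
  obtain ⟨h1, h2⟩ := (LinearIndependent.pair_iff.mp (hindep p)) _ _ key
  exact ⟨by linarith [sub_eq_zero.mp h1], h2⟩
end

section
/- Let {R, X₁, X₂} be a contact canonical frame on (Y,λ) and let φ_t denote the Reeb flow. If η = xX₁ + yX₂ ∈ ξ and dφ_t(η) = x(t)X₁ + y(t)X₂ along the flow line, then (x(t), y(t)) solves the linear system x'(t) = y(t), y'(t) = −K(t)x(t), with x(0) = x, y(0) = y. -/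
/-- Linearized Reeb flow in the frame coordinates: if η = x₀X₁ + y₀X₂ and
dφ_t(η) = x(t)X₁ + y(t)X₂ along the flow line of the Reeb field R through p,
then x'(t) = y(t) and y'(t) = −K(φ_t(p))·x(t), with x(0) = x₀, y(0) = y₀. -/
theorem stmt_11 {E : Type*} [NormedAddCommGroup E] [NormedSpace ℝ E]
    (R X₁ X₂ : E → E) (I J K : E → ℝ)
    (hRs : ContDiff ℝ (⊤ : ℕ∞) R) (hX₁s : ContDiff ℝ (⊤ : ℕ∞) X₁) (hX₂s : ContDiff ℝ (⊤ : ℕ∞) X₂)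
    (hbr1 : ∀ q, vbracket X₂ R q = X₁ q)
    (hbr2 : ∀ q, vbracket X₁ X₂ q = R q + I q • X₁ q + J q • X₂ q)
    (hbr3 : ∀ q, vbracket R X₁ q = K q • X₂ q)
    (hindep : ∀ q, LinearIndependent ℝ ![X₁ q, X₂ q])
    -- φ is the (Reeb) flow of R
    (φ : ℝ → E → E)
    (hφs : ContDiff ℝ (⊤ : ℕ∞) (fun u : ℝ × E => φ u.1 u.2))
    (hφ0 : ∀ q, φ 0 q = q)
    (hflow : ∀ t q, HasDerivAt (fun s => φ s q) (R (φ t q)) t)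
    -- frame coordinates of the image of η under the linearized flow
    (p : E) (x₀ y₀ : ℝ) (x y : ℝ → ℝ)
    (hxd : Differentiable ℝ x) (hyd : Differentiable ℝ y)
    (hx0 : x 0 = x₀) (hy0 : y 0 = y₀)
    (hcoord : ∀ t, fderiv ℝ (φ t) p (x₀ • X₁ p + y₀ • X₂ p) =
      x t • X₁ (φ t p) + y t • X₂ (φ t p)) :
    ∀ t, HasDerivAt x (y t) t ∧ HasDerivAt y (-(K (φ t p) * x t)) t := by
  intro t
  set η : E := x₀ • X₁ p + y₀ • X₂ p with hη
  set h : ℝ × ℝ → E := fun u => φ u.1 (p + u.2 • η) with hhdef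
  have hh : ContDiff ℝ (⊤ : ℕ∞) h := by
    have heq : h = (fun u : ℝ × E => φ u.1 u.2) ∘ (fun u : ℝ × ℝ => (u.1, p + u.2 • η)) := rfl
    rw [heq]
    exact hφs.comp (contDiff_fst.prodMk (contDiff_const.add (contDiff_snd.smul contDiff_const)))
  have hhd := hh.differentiable (by simp)
  set f' : ℝ × ℝ → (ℝ × ℝ →L[ℝ] E) := fderiv ℝ h with hf'def
  have hf'at : ∀ u, HasFDerivAt h (f' u) u := fun u => (hhd u).hasFDerivAt
  have hf's : ContDiff ℝ (⊤ : ℕ∞) f' := hh.fderiv_right (by simp)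
  set f'' := fderiv ℝ f' (t, 0) with hf''def
  have hf''at : HasFDerivAt f' f'' (t, 0) := ((hf's.differentiable (by simp)) _).hasFDerivAt
  have hsymm : ∀ v w, f'' v w = f'' w v := second_derivative_symmetric hf'at hf''at
  have hφq : ∀ s, ContDiff ℝ (⊤ : ℕ∞) (φ s) := fun s =>
    hφs.comp (contDiff_const.prodMk contDiff_id)
  -- (a) the first partial derivative of h is R ∘ h
  have ha : ∀ u : ℝ × ℝ, f' u ((1:ℝ), (0:ℝ)) = R (h u) := by
    intro u
    have h1 : HasDerivAt (fun s => h (s, u.2)) (f' u ((1:ℝ), (0:ℝ))) u.1 :=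
      by
        have := (hf'at (u.1, u.2)).comp_hasDerivAt u.1 ((hasDerivAt_id' u.1).prodMk (hasDerivAt_const u.1 u.2))
        exact this
    exact h1.unique (hflow u.1 (p + u.2 • η))
  -- (b) the second partial derivative along the axis is the transported vector
  have hb : ∀ s : ℝ, f' (s, 0) ((0:ℝ), (1:ℝ)) = x s • X₁ (φ s p) + y s • X₂ (φ s p) := by
    intro s
    have h1 : HasDerivAt (fun r => h (s, r)) (f' (s, 0) ((0:ℝ), (1:ℝ))) 0 :=
      (hf'at (s, 0)).comp_hasDerivAt 0 ((hasDerivAt_const (0:ℝ) s).prodMk (hasDerivAt_id (0:ℝ)))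
    have hcurve : HasDerivAt (fun r : ℝ => p + r • η) η 0 := by
      simpa using ((hasDerivAt_id (0:ℝ)).smul_const η).const_add p
    have h2 : HasDerivAt (fun r : ℝ => φ s (p + r • η)) (fderiv ℝ (φ s) p η) 0 := by
      have := (((hφq s).differentiable (by simp)) (p + (0:ℝ) • η)).hasFDerivAt.comp_hasDerivAt
        (0:ℝ) hcurve
      simpa [Function.comp_def] using this
    exact (h1.unique h2).trans (hcoord s)
  set c : E := φ t p with hc
  -- (c) derivative of s ↦ f' (s,0) (0,1)
  have hc1 : HasDerivAt (fun s : ℝ => f' (s, 0) ((0:ℝ), (1:ℝ))) (f'' (1, 0) (0, 1)) t := by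
    have h1 : HasFDerivAt (fun u => f' u ((0:ℝ), (1:ℝ)))
        ((ContinuousLinearMap.apply ℝ E ((0:ℝ), (1:ℝ))).comp f'') (t, 0) :=
      (ContinuousLinearMap.apply ℝ E ((0:ℝ), (1:ℝ))).hasFDerivAt.comp (t, 0) hf''at
    have := h1.comp_hasDerivAt t ((hasDerivAt_id t).prodMk (hasDerivAt_const t (0:ℝ)))
    simpa [Function.comp_def] using this
  -- (d) computing the symmetric second derivative via R ∘ h
  have hd : f'' ((0:ℝ), (1:ℝ)) ((1:ℝ), (0:ℝ)) = fderiv ℝ R c (f' (t, 0) ((0:ℝ), (1:ℝ))) := by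
    have h1 : HasFDerivAt (fun u => R (h u))
        ((ContinuousLinearMap.apply ℝ E ((1:ℝ), (0:ℝ))).comp f'') (t, 0) := by
      have h0 : HasFDerivAt (fun u => f' u ((1:ℝ), (0:ℝ)))
          ((ContinuousLinearMap.apply ℝ E ((1:ℝ), (0:ℝ))).comp f'') (t, 0) :=
        (ContinuousLinearMap.apply ℝ E ((1:ℝ), (0:ℝ))).hasFDerivAt.comp (t, 0) hf''at
      have heqf : (fun u => R (h u)) = fun u => f' u ((1:ℝ), (0:ℝ)) :=
        funext fun u => (ha u).symm
      rw [heqf]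
      exact h0
    have h2 : HasFDerivAt (fun u => R (h u))
        ((fderiv ℝ R (h (t, 0))).comp (f' (t, 0))) (t, 0) :=
      ((hRs.differentiable (by simp) _).hasFDerivAt).comp (t, 0) (hf'at (t, 0))
    have heq := h1.unique h2
    have happ := congrArg (fun L : (ℝ × ℝ) →L[ℝ] E => L ((0:ℝ), (1:ℝ))) heq
    have hpt : h (t, 0) = c := by simp [hhdef, hc]
    simpa [hpt] using happ
  -- the transported vector and its derivative in two ways
  have hgd : HasDerivAt (fun s : ℝ => x s • X₁ (φ s p) + y s • X₂ (φ s p))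
      (f'' (1, 0) (0, 1)) t := by
    have heqf : (fun s : ℝ => f' (s, 0) ((0:ℝ), (1:ℝ)))
        = fun s : ℝ => x s • X₁ (φ s p) + y s • X₂ (φ s p) := funext hb
    rw [← heqf]
    exact hc1
  have hφt : HasDerivAt (fun s => φ s p) (R c) t := hflow t p
  have hX1t : HasDerivAt (fun s => X₁ (φ s p)) (fderiv ℝ X₁ c (R c)) t :=
    ((hX₁s.differentiable (by simp) c).hasFDerivAt).comp_hasDerivAt t hφt
  have hX2t : HasDerivAt (fun s => X₂ (φ s p)) (fderiv ℝ X₂ c (R c)) t :=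
    ((hX₂s.differentiable (by simp) c).hasFDerivAt).comp_hasDerivAt t hφt
  have hx' : HasDerivAt x (deriv x t) t := (hxd t).hasDerivAt
  have hy' : HasDerivAt y (deriv y t) t := (hyd t).hasDerivAt
  have hgd2 : HasDerivAt (fun s : ℝ => x s • X₁ (φ s p) + y s • X₂ (φ s p))
      (x t • fderiv ℝ X₁ c (R c) + deriv x t • X₁ c
        + (y t • fderiv ℝ X₂ c (R c) + deriv y t • X₂ c)) t :=
    (hx'.smul hX1t).add (hy'.smul hX2t)
  have key := hgd.unique hgd2
  -- expand the right side using the bracket relations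
  have hb3 : fderiv ℝ X₁ c (R c) = fderiv ℝ R c (X₁ c) + K c • X₂ c := by
    have := hbr3 c
    simp only [vbracket] at this
    linear_combination (norm := module) this
  have hb1 : fderiv ℝ X₂ c (R c) = fderiv ℝ R c (X₂ c) - X₁ c := by
    have := hbr1 c
    simp only [vbracket] at this
    linear_combination (norm := module) -this
  have hval : f'' (1, 0) (0, 1) = x t • fderiv ℝ R c (X₁ c) + y t • fderiv ℝ R c (X₂ c) := by
    rw [hsymm (1, 0) (0, 1), hd, hb t]
    rw [map_add, map_smul, map_smul]
  rw [hval, hb3, hb1] at key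
  have E2 : (deriv x t - y t) • X₁ c + (deriv y t + K c * x t) • X₂ c = 0 := by
    linear_combination (norm := module) -key
  obtain ⟨e1, e2⟩ := (LinearIndependent.pair_iff.1 (hindep c)) _ _ E2
  constructor
  · have hxy : deriv x t = y t := by linarith
    exact hxy ▸ hx'
  · have hyy : deriv y t = -(K c * x t) := by linarith
    exact hyy ▸ hy'
end

section
/- Let A(t) = diag(1, K(t)) where K : ℝ/Tℤ → ℝ is continuous with K(t) ≥ 1 for all t. Let v : ℝ/Tℤ → ℝ² ∖ {0} satisfy τ·v(t) = −J₀·v'(t) − A(t)·v(t) for some τ ∈ ℝ, where J₀ = [[0,−1],[1,0]]. Writing v(t) = |v(t)|·e^{2πiθ(t)} for a smooth angle function θ, the winding Δ = θ(T) − θ(0) satisfies Δ ≥ (T/2π)(1 + τ). -/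
/-!
Differentiating the polar form gives the angular velocity `2π θ' |v|² = v₁ v₂' − v₂ v₁'`, and the
equation turns the right-hand side into `(1 + τ) v₁² + (K + τ) v₂² ≥ (1 + τ) |v|²` because `K ≥ 1`.
Hence `2π θ' ≥ 1 + τ` everywhere, and the mean value theorem on `[0, T]` gives the bound.
-/

open Real

theorem cross_deriv_eq_of_polar {v₁ v₂ r φ : ℝ → ℝ} {d₁ d₂ φ' t : ℝ}
    (hd₁ : HasDerivAt v₁ d₁ t) (hd₂ : HasDerivAt v₂ d₂ t) (hφ : HasDerivAt φ φ' t)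
    (hpol₁ : ∀ s, v₁ s = r s * cos (φ s)) (hpol₂ : ∀ s, v₂ s = r s * sin (φ s)) :
    v₁ t * d₂ - v₂ t * d₁ = φ' * r t ^ 2 := by
  -- `v₁ sin φ − v₂ cos φ` vanishes identically, so `r` need not be differentiable.
  have hzero : (fun s => v₁ s * sin (φ s) - v₂ s * cos (φ s)) = fun _ => 0 := by
    funext s
    rw [hpol₁, hpol₂]
    ring
  have hderiv : HasDerivAt (fun s => v₁ s * sin (φ s) - v₂ s * cos (φ s))
      (d₁ * sin (φ t) + v₁ t * (cos (φ t) * φ') -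
        (d₂ * cos (φ t) + v₂ t * (-sin (φ t) * φ'))) t :=
    (hd₁.mul (hasDerivAt_sin _ |>.comp t hφ)).sub (hd₂.mul (hasDerivAt_cos _ |>.comp t hφ))
  rw [hzero] at hderiv
  have hderiv_zero := hderiv.unique (hasDerivAt_const t 0)
  rw [hpol₁, hpol₂] at hderiv_zero ⊢
  linear_combination (-r t) * hderiv_zero + φ' * r t ^ 2 * sin_sq_add_cos_sq (φ t)

theorem one_add_le_deriv_angle {v₁ v₂ r φ : ℝ → ℝ} {d₁ d₂ φ' k τ t : ℝ}
    (hk : 1 ≤ k) (hd₁ : HasDerivAt v₁ d₁ t) (hd₂ : HasDerivAt v₂ d₂ t)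
    (hφ : HasDerivAt φ φ' t)
    (heq₁ : τ * v₁ t = d₂ - v₁ t) (heq₂ : τ * v₂ t = -d₁ - k * v₂ t)
    (hpol₁ : ∀ s, v₁ s = r s * cos (φ s)) (hpol₂ : ∀ s, v₂ s = r s * sin (φ s))
    (hr : r t ≠ 0) :
    1 + τ ≤ φ' := by
  have hcross : v₁ t * d₂ - v₂ t * d₁ = (1 + τ) * v₁ t ^ 2 + (k + τ) * v₂ t ^ 2 := by
    linear_combination (-v₁ t) * heq₁ - v₂ t * heq₂
  have hnorm : v₁ t ^ 2 + v₂ t ^ 2 = r t ^ 2 := by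
    rw [hpol₁, hpol₂]
    linear_combination r t ^ 2 * sin_sq_add_cos_sq (φ t)
  rw [cross_deriv_eq_of_polar hd₁ hd₂ hφ hpol₁ hpol₂] at hcross
  have hgap : φ' * r t ^ 2 - (1 + τ) * r t ^ 2 = (k - 1) * v₂ t ^ 2 := by
    linear_combination hcross + (1 + τ) * hnorm
  have hle : (1 + τ) * r t ^ 2 ≤ φ' * r t ^ 2 := by
    linarith [mul_nonneg (sub_nonneg.mpr hk) (sq_nonneg (v₂ t))]
  exact le_of_mul_le_mul_right hle (by positivity)

theorem stmt_14_general (K : ℝ → ℝ) (v₁ v₂ d₁ d₂ r θ : ℝ → ℝ) (τ T : ℝ)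
    (hT : 0 < T) (hKge : ∀ t, 1 ≤ K t)
    (hd₁ : ∀ t, HasDerivAt v₁ (d₁ t) t) (hd₂ : ∀ t, HasDerivAt v₂ (d₂ t) t)
    -- the eigenvalue equation τ·v = −J₀v' − A(t)v componentwise
    (heq₁ : ∀ t, τ * v₁ t = d₂ t - v₁ t)
    (heq₂ : ∀ t, τ * v₂ t = -d₁ t - K t * v₂ t)
    -- polar decomposition with smooth angle θ and radius r > 0
    (hrpos : ∀ t, 0 < r t)
    (hθd : Differentiable ℝ θ)
    (hpol₁ : ∀ t, v₁ t = r t * Real.cos (2 * π * θ t))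
    (hpol₂ : ∀ t, v₂ t = r t * Real.sin (2 * π * θ t)) :
    θ T - θ 0 ≥ (T / (2 * π)) * (1 + τ) := by
  have hθ' : ∀ t, (1 + τ) / (2 * π) ≤ deriv θ t := fun t => by
    rw [div_le_iff₀' two_pi_pos]
    exact one_add_le_deriv_angle (hKge t) (hd₁ t) (hd₂ t)
      ((hθd t).hasDerivAt.const_mul (2 * π)) (heq₁ t) (heq₂ t) hpol₁ hpol₂ (hrpos t).ne'
  have hmvt := mul_sub_le_image_sub_of_le_deriv hθd hθ' hT.le
  rw [sub_zero] at hmvt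
  linarith [div_mul_comm (1 + τ) (2 * π) T]

/-- Winding lower bound: let A(t) = diag(1,K(t)) with K T-periodic, K ≥ 1, and
let v = (v₁,v₂) be a nonvanishing T-periodic solution of τ·v = −J₀v' − A(t)v,
written as v(t) = r(t)·(cos 2πθ(t), sin 2πθ(t)).  Then the winding
Δ = θ(T) − θ(0) satisfies Δ ≥ (T/2π)(1+τ). -/
theorem stmt_14 (K : ℝ → ℝ) (v₁ v₂ d₁ d₂ r θ : ℝ → ℝ) (τ T : ℝ)
    (hT : 0 < T) (hK : Continuous K) (hKper : ∀ t, K (t + T) = K t)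
    (hKge : ∀ t, 1 ≤ K t)
    (hv₁per : ∀ t, v₁ (t + T) = v₁ t) (hv₂per : ∀ t, v₂ (t + T) = v₂ t)
    (hd₁ : ∀ t, HasDerivAt v₁ (d₁ t) t) (hd₂ : ∀ t, HasDerivAt v₂ (d₂ t) t)
    -- the eigenvalue equation τ·v = −J₀v' − A(t)v componentwise
    (heq₁ : ∀ t, τ * v₁ t = d₂ t - v₁ t)
    (heq₂ : ∀ t, τ * v₂ t = -d₁ t - K t * v₂ t)
    -- polar decomposition with smooth angle θ and radius r > 0
    (hr : ∀ t, r t = Real.sqrt (v₁ t ^ 2 + v₂ t ^ 2))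
    (hrpos : ∀ t, 0 < r t)
    (hθd : Differentiable ℝ θ)
    (hpol₁ : ∀ t, v₁ t = r t * Real.cos (2 * π * θ t))
    (hpol₂ : ∀ t, v₂ t = r t * Real.sin (2 * π * θ t)) :
    θ T - θ 0 ≥ (T / (2 * π)) * (1 + τ) :=
  stmt_14_general K v₁ v₂ d₁ d₂ r θ τ T hT hKge hd₁ hd₂ heq₁ heq₂ hrpos hθd hpol₁ hpol₂
end
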